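/- Let Y be a finite set of distinct K-rational points of P^{k-1}, let Q ∈ Y, and let L̃ ∈ R_1 be a linear form with L̃(v_P) ≠ 0 for every P ∈ Y. If h is a homogeneous polynomial that vanishes at every point of Y \ {Q} and satisfies h(v_Q) ≠ 0, then deg(h) ≥ s(Y), where s(Y) is the minimum socle degree computed with respect to L̃. -/

import Mathlib

open MvPolynomial

/-- The representative vectors define pairwise distinct points of projective space. -/
def ProjectivelyDistinct {K : Type*} [Field K] {n k : ℕ} (v : Fin n → Fin k → K) : Prop :=
  ∀ i j : Fin n, i ≠ j → ∀ c : K, v i ≠ c • v j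

/-- The points are in general linear position: any at most `k` of them are linearly
independent. -/
def GeneralLinearPosition (K : Type*) [Field K] {n k : ℕ} (v : Fin n → Fin k → K) : Prop :=
  ∀ S : Finset (Fin n), S.card ≤ k → LinearIndependent K (fun i : S => v (i : Fin n))

/-- Minimum distance of the evaluation code of order `a`. -/
noncomputable def minDist {K : Type*} [Field K] {n k : ℕ} (a : ℕ) (v : Fin n → Fin k → K) : ℕ :=
  sInf { m | ∃ f : MvPolynomial (Fin k) K, f.IsHomogeneous a ∧
      (∃ i, eval (v i) f ≠ 0) ∧ m = Set.ncard {i | eval (v i) f ≠ 0} }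

/-- Initial degree of the vanishing ideal of the subfamily of points indexed by `S`. -/
noncomputable def initDegOn {K : Type*} [Field K] {n k : ℕ}
    (v : Fin n → Fin k → K) (S : Set (Fin n)) : ℕ :=
  sInf { d | ∃ f : MvPolynomial (Fin k) K, f ≠ 0 ∧ f.IsHomogeneous d ∧ ∀ i ∈ S, eval (v i) f = 0 }

/-- Degree-`a` part of the vanishing ideal of the points indexed by `S`, as a subspace. -/
noncomputable def homVan {K : Type*} [Field K] {n k : ℕ} (a : ℕ)
    (v : Fin n → Fin k → K) (S : Set (Fin n)) : Submodule K (MvPolynomial (Fin k) K) :=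
  homogeneousSubmodule (Fin k) K a ⊓
    ⨅ i ∈ S, LinearMap.ker ((aeval (v i) : MvPolynomial (Fin k) K →ₐ[K] K).toLinearMap)

/-- Hilbert function of `R/I(X)` where `X` is the set of points indexed by `S`. -/
noncomputable def HFpts {K : Type*} [Field K] {n k : ℕ}
    (v : Fin n → Fin k → K) (S : Set (Fin n)) (i : ℕ) : ℕ :=
  Module.finrank K (homogeneousSubmodule (Fin k) K i) - Module.finrank K (homVan i v S)

/-- Maximum number of the points lying on a common hyperplane. -/
noncomputable def hypNum {K : Type*} [Field K] {n k : ℕ} (v : Fin n → Fin k → K) : ℕ :=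
  sSup { m | ∃ L : MvPolynomial (Fin k) K, L ≠ 0 ∧ L.IsHomogeneous 1 ∧
      m = Set.ncard {i | eval (v i) L = 0} }

/-- The homogeneous vanishing ideal of the points indexed by `S`. -/
noncomputable def projIdeal {K : Type*} [Field K] {n k : ℕ}
    (v : Fin n → Fin k → K) (S : Set (Fin n)) : Ideal (MvPolynomial (Fin k) K) :=
  Ideal.span { f | (∃ d, f.IsHomogeneous d) ∧ ∀ i ∈ S, eval (v i) f = 0 }

/-- The minimum socle degree of the Artinian reduction by the linear form `L` of the
coordinate ring of the points indexed by `S`. -/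
noncomputable def socleDeg {K : Type*} [Field K] {n k : ℕ}
    (v : Fin n → Fin k → K) (S : Set (Fin n)) (L : MvPolynomial (Fin k) K) : ℕ :=
  sInf { d | ∃ g : MvPolynomial (Fin k) K, g.IsHomogeneous d ∧
      g ∉ projIdeal v S ⊔ Ideal.span {L} ∧
      ∀ j : Fin k, MvPolynomial.X j * g ∈ projIdeal v S ⊔ Ideal.span {L} }

/-!
If a separator `h` of `Q` does not lie in `J = I(Y) + (L̃)`, it is a socle element of `R/J`:
`L̃(v_Q) x_j h - (v_Q)_j L̃ h` vanishes on `Y`, so `x_j h ∈ J`. If `h ∈ J`, write `h = p + g L̃`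
with `p ∈ I(Y)` and `g` homogeneous of degree `deg h - 1` (in degree `0` this would force
`h ∈ I(Y)`); since `L̃` vanishes nowhere on `Y`, `g` is again a separator of `Q`, and we descend
on the degree.
-/

attribute [local instance] MvPolynomial.gradedAlgebra

namespace MvPolynomial

variable {σ R : Type*} [CommRing R]

lemma homogeneousComponent_mul_of_isHomogeneous_right {L : MvPolynomial σ R} {m : ℕ}
    (hL : L.IsHomogeneous m) (g : MvPolynomial σ R) (n : ℕ) :
    homogeneousComponent n (g * L) =
      if m ≤ n then homogeneousComponent (n - m) g * L else 0 := by
  simp only [← decomposition.decompose'_apply]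
  exact DirectSum.coe_decompose_mul_of_right_mem (homogeneousSubmodule σ R) n hL

end MvPolynomial

section Separator

variable {K : Type*} [Field K] {n k : ℕ} {v : Fin n → Fin k → K} {S : Set (Fin n)}

lemma projIdeal_isHomogeneous (v : Fin n → Fin k → K) (S : Set (Fin n)) :
    (projIdeal v S).IsHomogeneous (homogeneousSubmodule (Fin k) K) :=
  Ideal.homogeneous_span _ _ fun _ hf => hf.1

lemma eval_eq_zero_of_mem_projIdeal {p : MvPolynomial (Fin k) K} (hp : p ∈ projIdeal v S)
    {i : Fin n} (hi : i ∈ S) : eval (v i) p = 0 :=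
  (Ideal.span_le (I := RingHom.ker (eval (v i))) |>.mpr fun _ hf => hf.2 i hi) hp

structure IsSeparator (v : Fin n → Fin k → K) (S : Set (Fin n)) (q : Fin n)
    (h : MvPolynomial (Fin k) K) : Prop where
  mem : q ∈ S
  eval_ne_zero : eval (v q) h ≠ 0
  eval_eq_zero : ∀ i ∈ S, i ≠ q → eval (v i) h = 0

namespace IsSeparator

variable {q : Fin n} {L h : MvPolynomial (Fin k) K} {d : ℕ}

lemma X_mul_mem_sup (hsep : IsSeparator v S q h) (hL : L.IsHomogeneous 1)
    (hLq : eval (v q) L ≠ 0) (hh : h.IsHomogeneous d) (j : Fin k) :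
    X j * h ∈ projIdeal v S ⊔ Ideal.span {L} := by
  set a := (eval (v q) L)⁻¹ * v q j
  have hf : X j * h - C a * L * h ∈ projIdeal v S := by
    refine Ideal.subset_span ⟨⟨1 + d, ?_⟩, fun i hi => ?_⟩
    · exact ((isHomogeneous_X K j).mul hh).sub (by simpa using ((hL.C_mul a).mul hh))
    · rcases eq_or_ne i q with rfl | hiq
      · simp only [a, map_sub, map_mul, eval_X, eval_C]
        field_simp
        ring
      · simp [hsep.eval_eq_zero i hi hiq]
  have hdecomp : X j * h = (X j * h - C a * L * h) + C a * h * L := by ring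
  rw [hdecomp]
  exact Ideal.add_mem _ (Ideal.mem_sup_left hf)
    (Ideal.mem_sup_right (Ideal.mul_mem_left _ _ (Ideal.mem_span_singleton_self L)))

lemma of_add_mul {p g : MvPolynomial (Fin k) K} (hsep : IsSeparator v S q (p + g * L))
    (hp : ∀ i ∈ S, eval (v i) p = 0) (hL : ∀ i ∈ S, eval (v i) L ≠ 0) :
    IsSeparator v S q g where
  mem := hsep.mem
  eval_ne_zero hg := hsep.eval_ne_zero (by simp [hp q hsep.mem, hg])
  eval_eq_zero i hi hiq := by
    have := hsep.eval_eq_zero i hi hiq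
    rw [map_add, map_mul, hp i hi, zero_add] at this
    exact (mul_eq_zero.mp this).resolve_right (hL i hi)

/-- The new separator is the degree-`e` part of the cofactor of `L`. -/
lemma exists_pred_of_mem_sup (hsep : IsSeparator v S q h) (hL : L.IsHomogeneous 1)
    (hLS : ∀ i ∈ S, eval (v i) L ≠ 0) (hh : h.IsHomogeneous d)
    (hmem : h ∈ projIdeal v S ⊔ Ideal.span {L}) :
    ∃ e g, d = e + 1 ∧ g.IsHomogeneous e ∧ IsSeparator v S q g := by
  obtain ⟨p, hp, _, hz, hpz⟩ := Submodule.mem_sup.mp hmem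
  obtain ⟨g, rfl⟩ := Ideal.mem_span_singleton'.mp hz
  have hcomp : h = homogeneousComponent d p + homogeneousComponent d (g * L) := by
    rw [← map_add, hpz, homogeneousComponent_of_mem hh, if_pos rfl]
  have hp₀ : ∀ i ∈ S, eval (v i) (homogeneousComponent d p) = 0 := fun i hi =>
    eval_eq_zero_of_mem_projIdeal
      (homogeneousComponent_mem_of_mem (projIdeal_isHomogeneous v S) hp d) hi
  rw [homogeneousComponent_mul_of_isHomogeneous_right hL] at hcomp
  split_ifs at hcomp with hd
  · subst hcomp
    exact ⟨d - 1, _, by omega, homogeneousComponent_isHomogeneous _ _, hsep.of_add_mul hp₀ hLS⟩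
  · exact absurd (by rw [hcomp, add_zero]; exact hp₀ q hsep.mem) hsep.eval_ne_zero

lemma socleDeg_le (hsep : IsSeparator v S q h) (hL : L.IsHomogeneous 1)
    (hLS : ∀ i ∈ S, eval (v i) L ≠ 0) (hh : h.IsHomogeneous d) :
    socleDeg v S L ≤ d := by
  induction d using Nat.strong_induction_on generalizing h with
  | _ d ih =>
  by_cases hmem : h ∈ projIdeal v S ⊔ Ideal.span {L}
  · obtain ⟨e, g, rfl, hg, hsep'⟩ := hsep.exists_pred_of_mem_sup hL hLS hh hmem
    exact (ih e e.lt_succ_self hsep' hg).trans e.le_succ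
  · exact Nat.sInf_le ⟨h, hh, hmem, hsep.X_mul_mem_sup hL (hLS q hsep.mem) hh⟩

end IsSeparator

end Separator

theorem separator_degree_ge_socleDeg_general {K : Type*} [Field K] {n k : ℕ}
    (v : Fin n → Fin k → K)
    (q : Fin n)
    (L : MvPolynomial (Fin k) K) (hL : L.IsHomogeneous 1)
    (hLne : ∀ i, eval (v i) L ≠ 0)
    (d : ℕ) (h : MvPolynomial (Fin k) K) (hh : h.IsHomogeneous d)
    (hvan : ∀ i, i ≠ q → eval (v i) h = 0) (hq : eval (v q) h ≠ 0) :
    socleDeg v Set.univ L ≤ d :=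
  IsSeparator.socleDeg_le ⟨Set.mem_univ q, hq, fun i _ => hvan i⟩ hL (fun i _ => hLne i) hh

/-- Step 2 in the proof of Theorem 4.2: a homogeneous separator of a
point `Q ∈ Y` has degree at least `s(Y)`. -/
theorem separator_degree_ge_socleDeg {K : Type*} [Field K] {n k : ℕ}
    (hk : 2 ≤ k)
    (v : Fin n → Fin k → K) (hv0 : ∀ i, v i ≠ 0) (hdist : ProjectivelyDistinct v)
    (q : Fin n)
    (L : MvPolynomial (Fin k) K) (hL : L.IsHomogeneous 1)
    (hLne : ∀ i, eval (v i) L ≠ 0)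
    (d : ℕ) (h : MvPolynomial (Fin k) K) (hh : h.IsHomogeneous d)
    (hvan : ∀ i, i ≠ q → eval (v i) h = 0) (hq : eval (v q) h ≠ 0) :
    socleDeg v Set.univ L ≤ d :=
  separator_degree_ge_socleDeg_general v q L hL hLne d h hh hvan hq
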